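/- Let ℏ, m, g, E₀, N > 0, set κ = √(2mE₀)/ℏ, and for each n ≥ 0 define ψₙ : (ℝ³)ⁿ → ℂ by ψₙ(y₁,…,yₙ) = N (−gm)ⁿ / ((2πℏ²)ⁿ √(n!)) ∏_{j=1}^n e^{−κ|y_j|}/|y_j| (with ψ₀ = N). Then for every n ≥ 1, every j ∈ {1,…,n}, and every fixed (y₁,…,y_{j−1},y_{j+1},…,yₙ) with all y_k ≠ 0, the interior–boundary condition holds: lim_{y_j→0} |y_j| ψₙ(y₁,…,yₙ) = −(mg/(2πℏ²√n)) ψ_{n−1}(y₁,…,y_{j−1},y_{j+1},…,yₙ). -/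
import Mathlib


open Real Complex Filter

/-- The sectors of the dressed ground state of the van Hove-type IBC model:
`ψₙ(y₁,…,yₙ) = N (−gm)ⁿ/((2πℏ²)ⁿ √n!) ∏ⱼ e^{−κ|yⱼ|}/|yⱼ|`. -/
noncomputable def dressedState (ℏ m g κ N : ℝ) (n : ℕ)
    (y : Fin n → EuclideanSpace ℝ (Fin 3)) : ℂ :=
  ((N * (-(g * m)) ^ n / ((2 * π * ℏ ^ 2) ^ n * Real.sqrt (Nat.factorial n)) *
      ∏ j, Real.exp (-(κ * ‖y j‖)) / ‖y j‖ : ℝ) : ℂ)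

/-- **The dressed ground state of the van Hove-type model satisfies the
interior–boundary condition.** With `κ = √(2mE₀)/ℏ`, for every sector with `n ≥ 1`
particles (written here as `n+1`), every particle index `j`, and every fixed
configuration of the remaining particles away from the origin,
`lim_{y_j→0} |y_j| ψ_{n+1}(y₁,…,y_{n+1}) = −(mg/(2πℏ²√(n+1))) ψₙ(y withoutʲ)`. -/
theorem dressedState_satisfies_IBC
    (ℏ m g E₀ N : ℝ) (hℏ : 0 < ℏ) (hm : 0 < m) (hg : 0 < g) (hE₀ : 0 < E₀) (hN : 0 < N)
    (κ : ℝ) (hκdef : κ = Real.sqrt (2 * m * E₀) / ℏ) :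
    ∀ (n : ℕ) (j : Fin (n + 1)) (y : Fin (n + 1) → EuclideanSpace ℝ (Fin 3)),
      (∀ k, k ≠ j → y k ≠ 0) →
      Filter.Tendsto
        (fun z : EuclideanSpace ℝ (Fin 3) =>
          (‖z‖ : ℂ) * dressedState ℏ m g κ N (n + 1) (Function.update y j z))
        (nhdsWithin (0 : EuclideanSpace ℝ (Fin 3)) {(0 : EuclideanSpace ℝ (Fin 3))}ᶜ)
        (nhds ((-(m * g / (2 * π * ℏ ^ 2 * Real.sqrt ((n : ℝ) + 1))) : ℝ) *
          dressedState ℏ m g κ N n (fun k => y (j.succAbove k)))) := by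
  intro n j y hy
  set P : ℝ := ∏ k : Fin n, Real.exp (-(κ * ‖y (j.succAbove k)‖)) / ‖y (j.succAbove k)‖
    with hP
  set C : ℝ := N * (-(g * m)) ^ (n + 1) /
      ((2 * π * ℏ ^ 2) ^ (n + 1) * Real.sqrt (Nat.factorial (n + 1))) with hC
  have h2π : (2 * π * ℏ ^ 2) ≠ 0 := by positivity
  have hfl : Real.sqrt (Nat.factorial n) ≠ 0 := by positivity
  have hn1 : Real.sqrt ((n : ℝ) + 1) ≠ 0 := by positivity
  -- the function agrees on the punctured neighbourhood with a continuous function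
  have key : ∀ z : EuclideanSpace ℝ (Fin 3), z ≠ 0 →
      (‖z‖ : ℂ) * dressedState ℏ m g κ N (n + 1) (Function.update y j z)
        = ((C * Real.exp (-(κ * ‖z‖)) * P : ℝ) : ℂ) := by
    intro z hz
    have hzn : ‖z‖ ≠ 0 := norm_ne_zero_iff.mpr hz
    unfold dressedState
    rw [Fin.prod_univ_succAbove
      (fun k => Real.exp (-(κ * ‖Function.update y j z k‖)) / ‖Function.update y j z k‖) j]
    have h1 : Function.update y j z j = z := Function.update_self j z y
    have h2 : ∀ k : Fin n, Function.update y j z (j.succAbove k) = y (j.succAbove k) := by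
      intro k
      exact Function.update_of_ne (Fin.succAbove_ne j k) z y
    simp only [h1, h2]
    rw [← hP, ← hC, ← Complex.ofReal_mul]
    congr 1
    field_simp
  have heq : ∀ᶠ z in nhdsWithin (0 : EuclideanSpace ℝ (Fin 3)) {(0 : EuclideanSpace ℝ (Fin 3))}ᶜ,
      ((fun z : EuclideanSpace ℝ (Fin 3) => ((C * Real.exp (-(κ * ‖z‖)) * P : ℝ) : ℂ)) z)
        = (‖z‖ : ℂ) * dressedState ℏ m g κ N (n + 1) (Function.update y j z) := by
    filter_upwards [self_mem_nhdsWithin] with z hz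
    exact (key z hz).symm
  refine Tendsto.congr' heq ?_
  have hcontR : Continuous fun z : EuclideanSpace ℝ (Fin 3) =>
      C * Real.exp (-(κ * ‖z‖)) * P :=
    (continuous_const.mul (Real.continuous_exp.comp
      ((continuous_const.mul continuous_norm).neg))).mul continuous_const
  have hcont : Continuous fun z : EuclideanSpace ℝ (Fin 3) =>
      ((C * Real.exp (-(κ * ‖z‖)) * P : ℝ) : ℂ) :=
    Complex.continuous_ofReal.comp hcontR
  have hT : Filter.Tendsto (fun z : EuclideanSpace ℝ (Fin 3) =>
      ((C * Real.exp (-(κ * ‖z‖)) * P : ℝ) : ℂ))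
      (nhdsWithin (0 : EuclideanSpace ℝ (Fin 3)) {(0 : EuclideanSpace ℝ (Fin 3))}ᶜ)
      (nhds ((C * Real.exp (-(κ * ‖(0 : EuclideanSpace ℝ (Fin 3))‖)) * P : ℝ) : ℂ)) :=
    (hcont.tendsto 0).mono_left nhdsWithin_le_nhds
  have hval : ((C * Real.exp (-(κ * ‖(0 : EuclideanSpace ℝ (Fin 3))‖)) * P : ℝ) : ℂ)
      = ((-(m * g / (2 * π * ℏ ^ 2 * Real.sqrt ((n : ℝ) + 1))) : ℝ) : ℂ) *
        dressedState ℏ m g κ N n (fun k => y (j.succAbove k)) := by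
    unfold dressedState
    rw [← hP, ← Complex.ofReal_mul]
    congr 1
    simp only [norm_zero, mul_zero, neg_zero, Real.exp_zero, mul_one]
    rw [hC]
    have hfact : Real.sqrt (Nat.factorial (n + 1))
        = Real.sqrt ((n : ℝ) + 1) * Real.sqrt (Nat.factorial n) := by
      rw [← Real.sqrt_mul (by positivity)]
      congr 1
      rw [Nat.factorial_succ]
      push_cast
      ring
    rw [hfact, pow_succ]
    field_simp
    ring
  rw [hval] at hT
  exact_mod_cast hT
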